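/- arXiv:2008.06005 — 3 statements merged into one kernel-verified Lean document; each statement's English description precedes it below -/
import Mathlib

section
/- Let C be a category with a descending chain of ideals rad^ν indexed by ordinals, where rad^0 is all morphisms, rad^{n+1} is generated by compositions of n+1 morphisms of rad^1, rad^ν = ⋂_{λ<ν} rad^λ for limit ν, and rad^{λ+n} = (rad^λ)^{n+1} for limit λ and n ≥ 1. Define rk(f) = ν if f ∈ rad^ν \ rad^{ν+1}, and rk(f) = ∞ if f lies in every rad^ν. If f = h ∘ g with rk(g) ≥ ν and rk(h) ≥ ν for some ordinal ν ≥ 1, then rk(f) > ν (i.e., f ∈ rad^{ν+1}). -/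
/-!
Every ordinal `ν ≥ 1` is either finite or of the form `λ + n` with `λ` a limit. In both cases the
successor recurrence writes `rad^{ν+1}` as `rad^ν` followed by a base ideal (`rad^1`, resp.
`rad^λ`), and that base ideal already contains `rad^ν`.
-/

open CategoryTheory

universe w

/-- An ordinal-indexed descending chain of two-sided ideals `rad^ν` of a category, satisfying
the defining recurrences of the transfinite powers of the radical:
`rad^0` is everything, `rad^{n+1}` (finite `n ≥ 1`) is generated by compositions of a morphism
of `rad^n` with a morphism of `rad^1`, `rad^ν = ⋂_{μ<ν} rad^μ` at limits, and
`rad^{λ+n+1} = rad^{λ+n} ∘ rad^λ` for `λ` a limit ordinal. -/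
structure RadChain (C : Type*) [Category C] where
  rad : Ordinal.{w} → ∀ X Y : C, Set (X ⟶ Y)
  ideal_post : ∀ (ν : Ordinal) (X Y Z : C) (f : X ⟶ Y) (g : Y ⟶ Z),
    f ∈ rad ν X Y → f ≫ g ∈ rad ν X Z
  ideal_pre : ∀ (ν : Ordinal) (X Y Z : C) (f : Y ⟶ Z) (g : X ⟶ Y),
    f ∈ rad ν Y Z → g ≫ f ∈ rad ν X Z
  rad_zero : ∀ X Y : C, rad 0 X Y = Set.univ
  rad_succ_fin : ∀ n : ℕ, 1 ≤ n → ∀ (X Y : C) (f : X ⟶ Y),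
    (f ∈ rad (n + 1) X Y ↔
      ∃ (Z : C) (g : X ⟶ Z) (h : Z ⟶ Y), g ∈ rad n X Z ∧ h ∈ rad 1 Z Y ∧ f = g ≫ h)
  rad_limit : ∀ ν : Ordinal, Order.IsSuccLimit ν → ∀ (X Y : C) (f : X ⟶ Y),
    (f ∈ rad ν X Y ↔ ∀ μ < ν, f ∈ rad μ X Y)
  rad_limit_succ : ∀ lam : Ordinal, Order.IsSuccLimit lam → ∀ (n : ℕ) (X Y : C) (f : X ⟶ Y),
    (f ∈ rad (lam + (n + 1)) X Y ↔
      ∃ (Z : C) (g : X ⟶ Z) (h : Z ⟶ Y),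
        g ∈ rad (lam + n) X Z ∧ h ∈ rad lam Z Y ∧ f = g ≫ h)

theorem Ordinal.exists_natCast_or_isSuccLimit_add_natCast (ν : Ordinal) :
    (∃ n : ℕ, ν = n) ∨ ∃ lam : Ordinal, Order.IsSuccLimit lam ∧ ∃ n : ℕ, ν = lam + n := by
  induction ν using Ordinal.limitRecOn with
  | zero => exact Or.inl ⟨0, Nat.cast_zero.symm⟩
  | add_one ν ih =>
    rcases ih with ⟨n, rfl⟩ | ⟨lam, hlam, n, rfl⟩
    · exact Or.inl ⟨n + 1, (Nat.cast_succ n).symm⟩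
    · exact Or.inr ⟨lam, hlam, n + 1, by rw [Nat.cast_succ, add_assoc]⟩
  | limit ν hν _ => exact Or.inr ⟨ν, hν, 0, (add_zero ν).symm⟩

namespace RadChain

variable {C : Type*} [Category C] (R : RadChain C) {X Y : C} {f : X ⟶ Y}

theorem mem_rad_one_of_mem_natCast {n : ℕ} (hn : 1 ≤ n) (hf : f ∈ R.rad n X Y) :
    f ∈ R.rad 1 X Y := by
  obtain ⟨m, rfl⟩ : ∃ m, n = m + 1 := ⟨n - 1, by omega⟩
  rcases m with _ | m
  · simpa using hf
  · rw [Nat.cast_succ] at hf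
    obtain ⟨W, a, b, -, hb, rfl⟩ := (R.rad_succ_fin (m + 1) (by omega) X Y f).1 hf
    exact R.ideal_pre 1 X W Y b a hb

theorem mem_rad_of_mem_add_natCast {lam : Ordinal} (hlam : Order.IsSuccLimit lam) (n : ℕ)
    (hf : f ∈ R.rad (lam + n) X Y) : f ∈ R.rad lam X Y := by
  rcases n with _ | m
  · simpa using hf
  · rw [Nat.cast_succ] at hf
    obtain ⟨W, a, b, -, hb, rfl⟩ := (R.rad_limit_succ lam hlam m X Y f).1 hf
    exact R.ideal_pre lam X W Y b a hb

end RadChain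

/-- If `f = h ∘ g` with `rk(g) ≥ ν` and `rk(h) ≥ ν` for some ordinal `ν ≥ 1`
(membership `g ∈ rad^ν`, `h ∈ rad^ν`), then `rk(f) > ν`, i.e. `f ∈ rad^{ν+1}`. -/
theorem rank_comp_gt {C : Type*} [Category C] (R : RadChain C) {X Z Y : C}
    (ν : Ordinal) (hν : 1 ≤ ν) (g : X ⟶ Z) (h : Z ⟶ Y) (f : X ⟶ Y)
    (hf : f = g ≫ h) (hg : g ∈ R.rad ν X Z) (hh : h ∈ R.rad ν Z Y) :
    f ∈ R.rad (ν + 1) X Y := by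
  subst hf
  rcases ν.exists_natCast_or_isSuccLimit_add_natCast with ⟨n, rfl⟩ | ⟨lam, hlam, n, rfl⟩
  · have hn : 1 ≤ n := by exact_mod_cast hν
    exact (R.rad_succ_fin n hn X Y _).2
      ⟨Z, g, h, hg, R.mem_rad_one_of_mem_natCast hn hh, rfl⟩
  · rw [add_assoc]
    exact (R.rad_limit_succ lam hlam n X Y _).2
      ⟨Z, g, h, hg, R.mem_rad_of_mem_add_natCast hlam n hh, rfl⟩
end

section
/- Let Λ be a string algebra. A string algebra has only finitely many prime bands. More precisely, if m is an absolute bound on the length of any direct string (path in Q avoiding relations) and n is the number of two-letter strings of the form aB with a, b arrows, then the length of any prime band is absolutely bounded, hence the set of prime bands is finite. -/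
/-- A quiver with a set of monomial relations, presenting a string algebra. -/
structure SAQuiver where
  V : Type
  A : Type
  src : A → V
  tgt : A → V
  rel : Set (List A)

namespace SA

variable (S : SAQuiver)

/-- A syllable: a direct arrow (`Sum.inl`) or the formal inverse of an arrow (`Sum.inr`). -/
abbrev Syl := S.A ⊕ S.A

/-- A word of syllables, listed in order of traversal (the head is the first,
i.e. rightmost, syllable in the usual right-to-left notation `αₙ…α₁`). -/
abbrev Word := List (Syl S)

def sylSrc : Syl S → S.V
  | Sum.inl a => S.src a
  | Sum.inr a => S.tgt a

def sylTgt : Syl S → S.V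
  | Sum.inl a => S.tgt a
  | Sum.inr a => S.src a

def sylInv : Syl S → Syl S
  | Sum.inl a => Sum.inr a
  | Sum.inr a => Sum.inl a

/-- Consecutive syllables compose as a walk. -/
def IsWalk : Word S → Prop
  | [] => True
  | [_] => True
  | x :: y :: l => sylTgt S x = sylSrc S y ∧ IsWalk (y :: l)

/-- No two consecutive syllables are inverse to each other. -/
def Reduced : Word S → Prop
  | x :: y :: l => y ≠ sylInv S x ∧ Reduced (y :: l)
  | _ => True

/-- No subword is a relation or the inverse of a relation. -/
def AvoidsRel (w : Word S) : Prop :=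
  ∀ p ∈ S.rel, ¬ ((p.map (Sum.inl : S.A → Syl S)) <:+: w) ∧
    ¬ ((p.map (Sum.inr : S.A → Syl S)).reverse <:+: w)

/-- A (finite, nonempty) string. -/
def IsStr (w : Word S) : Prop :=
  w ≠ [] ∧ IsWalk S w ∧ Reduced S w ∧ AvoidsRel S w

def wSrc : Word S → Option S.V
  | [] => none
  | x :: _ => some (sylSrc S x)

def wTgt (w : Word S) : Option S.V := w.getLast?.map (sylTgt S)

/-- A cyclic word: its target equals its source. -/
def Cyclic (w : Word S) : Prop := w ≠ [] ∧ wSrc S w = wTgt S w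

/-- The `n`-th power of a word under concatenation. -/
def pow (w : Word S) (n : ℕ) : Word S := (List.replicate n w).flatten

/-- A word containing both a direct and an inverse syllable. -/
def Mixed (w : Word S) : Prop := (∃ a, Sum.inl a ∈ w) ∧ (∃ a, Sum.inr a ∈ w)

/-- A word that is not a proper power of a shorter word. -/
def Primitive (w : Word S) : Prop := ¬ ∃ (u : Word S) (k : ℕ), 2 ≤ k ∧ w = pow S u k

/-- A rotation (cyclic permutation) of a word. -/
def IsRotation (u w : Word S) : Prop := ∃ l₁ l₂ : Word S, w = l₁ ++ l₂ ∧ u = l₂ ++ l₁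

/-- A band: a primitive mixed cyclic string, all of whose powers are strings, whose first
syllable is inverse and whose last syllable is direct. -/
def IsBand (w : Word S) : Prop :=
  IsStr S w ∧ Cyclic S w ∧ Primitive S w ∧
    (∃ a, w.head? = some (Sum.inr a)) ∧ (∃ a, w.getLast? = some (Sum.inl a)) ∧
    ∀ n : ℕ, 1 ≤ n → IsStr S (pow S w n)

/-- A cyclic permutation of a band. -/
def RotOfBand (u : Word S) : Prop := ∃ b, IsBand S b ∧ IsRotation S u b

/-- A prime band: no cyclic permutation of it is a concatenation of two or more cyclic
permutations of bands. -/
def IsPrimeBand (w : Word S) : Prop :=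
  IsBand S w ∧
    ¬ ∃ (w' : Word S) (parts : List (Word S)), IsRotation S w' w ∧ 2 ≤ parts.length ∧
        w' = parts.flatten ∧ ∀ p ∈ parts, RotOfBand S p

/-- A word containing no cyclic permutation of a band as a subword. -/
def BandFree (w : Word S) : Prop := ¬ ∃ u, RotOfBand S u ∧ u <:+: w

/-- A word all of whose syllables are direct. -/
def DirectWord (w : Word S) : Prop := ∀ x ∈ w, ∃ a, x = Sum.inl a

/-- A word all of whose syllables are inverse. -/
def InverseWord (w : Word S) : Prop := ∀ x ∈ w, ∃ a, x = Sum.inr a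

/-- A string which is a substring of a cyclic permutation of a band. -/
def Extendable (w : Word S) : Prop := ∃ u, RotOfBand S u ∧ w <:+: u

/-- The axioms for `(Q, ρ)` to present a string algebra. -/
def IsStringAlgebra : Prop :=
  Finite S.V ∧ Finite S.A ∧
  (∀ p ∈ S.rel, p ≠ [] ∧ IsWalk S (p.map (Sum.inl : S.A → Syl S))) ∧
  {p : List S.A | p ≠ [] ∧ IsWalk S (p.map (Sum.inl : S.A → Syl S)) ∧
      ∀ q ∈ S.rel, ¬ (q <:+: p)}.Finite ∧
  (∀ v : S.V, ¬ ∃ a b c : S.A, a ≠ b ∧ b ≠ c ∧ a ≠ c ∧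
      S.src a = v ∧ S.src b = v ∧ S.src c = v) ∧
  (∀ v : S.V, ¬ ∃ a b c : S.A, a ≠ b ∧ b ≠ c ∧ a ≠ c ∧
      S.tgt a = v ∧ S.tgt b = v ∧ S.tgt c = v) ∧
  (∀ b c₁ c₂ : S.A, c₁ ≠ c₂ → IsStr S [Sum.inl b, Sum.inl c₁] →
      ¬ IsStr S [Sum.inl b, Sum.inl c₂]) ∧
  (∀ b a₁ a₂ : S.A, a₁ ≠ a₂ → IsStr S [Sum.inl a₁, Sum.inl b] →
      ¬ IsStr S [Sum.inl a₂, Sum.inl b])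

end SA

namespace SA

variable (S : SAQuiver)

/-! ### Sign functions and hammocks -/

/-- `σ` of a syllable: `σ(a) = σ a`, `σ(B) = ε b`. -/
def sylSg (σ ε : S.A → ℤ) : Syl S → ℤ
  | Sum.inl a => σ a
  | Sum.inr a => ε a

/-- `ε` of a syllable: `ε(a) = ε a`, `ε(B) = σ b`. -/
def sylEp (σ ε : S.A → ℤ) : Syl S → ℤ
  | Sum.inl a => ε a
  | Sum.inr a => σ a

/-- The conditions on the chosen sign maps `σ, ε : Q₁ → {±1}`. -/
def SignOK (σ ε : S.A → ℤ) : Prop :=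
  (∀ a, σ a = 1 ∨ σ a = -1) ∧ (∀ a, ε a = 1 ∨ ε a = -1) ∧
  (∀ a b, a ≠ b → S.src a = S.src b → σ a = -σ b) ∧
  (∀ a b, a ≠ b → S.tgt a = S.tgt b → ε a = -ε b) ∧
  (∀ c b : S.A, IsStr S [Sum.inl c, Sum.inl b] → σ b = -ε c)

/-- Membership in the hammock `H_r(v)`: strings ending at `v` with `ε`-value `1`;
the empty word stands for the lazy string `1_{(v,1)}`. -/
def HrMem (σ ε : S.A → ℤ) (v : S.V) (w : Word S) : Prop :=
  w = [] ∨ (IsStr S w ∧ wTgt S w = some v ∧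
    ∃ s, w.getLast? = some s ∧ sylEp S σ ε s = 1)

/-- The order `<_r` on `H_r(v)`:  `u <_r v` iff `v = u a x`, or `u = v B y`, or
`v = z a x ∧ u = z B y`. -/
def ltr (u v : Word S) : Prop :=
  (∃ (a : S.A) (x : Word S), v = x ++ [Sum.inl a] ++ u) ∨
  (∃ (b : S.A) (y : Word S), u = y ++ [Sum.inr b] ++ v) ∨
  (∃ (a b : S.A) (x y z : Word S),
      v = x ++ [Sum.inl a] ++ z ∧ u = y ++ [Sum.inr b] ++ z)

/-- The inverse of a word. -/
def wInv (w : Word S) : Word S := (w.map (sylInv S)).reverse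

/-- Membership in the hammock `H_l(v)`: strings starting at `v` with `σ`-value `-1`;
the empty word stands for the lazy string `1_{(v,-1)}`'s role in `H_l(v)`. -/
def HlMem (σ ε : S.A → ℤ) (v : S.V) (w : Word S) : Prop :=
  w = [] ∨ (IsStr S w ∧ wSrc S w = some v ∧
    ∃ s, w.head? = some s ∧ sylSg S σ ε s = -1)

/-- The order `<_l` on `H_l(v)`: `u <_l v` iff `v⁻¹ <_r u⁻¹`. -/
def ltl (u v : Word S) : Prop := ltr S (wInv S v) (wInv S u)

/-- `v` is the direct successor of `u` in the total order `lt` restricted to `P`. -/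
def DirSucc (P : Word S → Prop) (lt : Word S → Word S → Prop) (u v : Word S) : Prop :=
  P u ∧ P v ∧ lt u v ∧ ¬ ∃ w, P w ∧ lt u w ∧ lt w v

/-- A finite interval (chain of consecutive elements) in a hammock whose length sequence is
monotone. -/
def MonoChain (P : Word S → Prop) (lt : Word S → Word S → Prop) (n : ℕ)
    (c : ℕ → Word S) : Prop :=
  (∀ i < n, DirSucc S P lt (c i) (c (i + 1))) ∧
  ((∀ i < n, (c i).length < (c (i + 1)).length) ∨
   (∀ i < n, (c (i + 1)).length < (c i).length))

/-- Torsion-freeness for one hammock: every finite interval with monotone length sequence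
extends (on one of its two ends) to a strictly larger such interval. -/
def TFfor (P : Word S → Prop) (lt : Word S → Word S → Prop) : Prop :=
  ∀ (n : ℕ) (c : ℕ → Word S), MonoChain S P lt n c →
    ∃ c' : ℕ → Word S, MonoChain S P lt (n + 1) c' ∧
      ((∀ i ≤ n, c' i = c i) ∨ (∀ i ≤ n, c' (i + 1) = c i))

/-- A torsion-free string algebra: both the left and right hammock conditions hold at
every vertex. -/
def TorsionFree (σ ε : S.A → ℤ) : Prop :=
  (∀ v : S.V, TFfor S (HrMem S σ ε v) (ltr S)) ∧
  (∀ v : S.V, TFfor S (HlMem S σ ε v) (ltl S))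

/-! ### Bridges and the bridge quiver -/

/-- A weak bridge `b₁ → b₂`: a band-free string `u` (possibly of length zero) such that
`b₂ u b₁` is a string. -/
def IsWeakBridge (b₁ u b₂ : Word S) : Prop :=
  IsPrimeBand S b₁ ∧ IsPrimeBand S b₂ ∧ BandFree S u ∧ IsStr S (b₁ ++ u ++ b₂)

/-- A bridge: a weak bridge which does not factor through another prime band. -/
def IsBridge (b₁ u b₂ : Word S) : Prop :=
  IsWeakBridge S b₁ u b₂ ∧
  ¬ ∃ (bb u₁ u₂ : Word S), IsPrimeBand S bb ∧ IsWeakBridge S b₁ u₁ bb ∧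
      IsWeakBridge S bb u₂ b₂ ∧
      ((u = u₁ ++ u₂ ∧ u₁ ≠ [] ∧ u₂ ≠ []) ∨
       (∃ u₁' u₂' u₁'' u₂'' : Word S, u = u₁' ++ u₂' ∧ u₁' ≠ [] ∧ u₂' ≠ [] ∧
          u₁ = u₁' ++ u₁'' ∧ u₂ = u₂'' ++ u₂' ∧ bb = u₁'' ++ u₂''))

/-- `R` is a set of representatives of the prime bands up to cyclic permutation. -/
def RepSet (R : Set (Word S)) : Prop :=
  (∀ r ∈ R, IsPrimeBand S r) ∧
  ∀ b, IsPrimeBand S b → ∃! r, r ∈ R ∧ IsRotation S b r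

/-- One arrow of the bridge quiver with vertex set `R`. -/
def Step (R : Set (Word S)) (x y : Word S) : Prop :=
  x ∈ R ∧ y ∈ R ∧ ∃ u, IsBridge S x u y

/-- Reachability by a directed path in the bridge quiver. -/
def Reach (R : Set (Word S)) : Word S → Word S → Prop :=
  Relation.ReflTransGen (Step S R)

/-- Adjacency (in either direction) in the bridge quiver. -/
def Adj (R : Set (Word S)) (x y : Word S) : Prop := Step S R x y ∨ Step S R y x

/-- Lying in the same connected component of the bridge quiver. -/
def SameComp (R : Set (Word S)) : Word S → Word S → Prop :=
  Relation.ReflTransGen (Adj S R)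

/-- `x` lies on a meta-band, i.e. on a directed cycle of positive length in the bridge
quiver. -/
def OnMetaBand (R : Set (Word S)) (x : Word S) : Prop :=
  (∃ u, IsBridge S x u x ∧ u ≠ []) ∨
  (∃ y, y ≠ x ∧ y ∈ R ∧ Reach S R x y ∧ Reach S R y x)

/-- A meta-`⋃`-cyclic string algebra: each connected component of the bridge quiver has at
least two vertices and is a union of meta-bands (every vertex and every arrow lies on a
directed cycle of positive length). -/
def MetaUCyclic (R : Set (Word S)) : Prop :=
  (∀ x ∈ R, ∃ y ∈ R, y ≠ x ∧ SameComp S R x y) ∧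
  (∀ x ∈ R, OnMetaBand S R x) ∧
  (∀ x y u, x ∈ R → y ∈ R → IsBridge S x u y → Reach S R y x)

/-- A meta-torsion-free string algebra: each connected component of the bridge quiver has
at least two vertices, and every finite directed path of positive length extends to a
`ℤ`-indexed directed path. -/
def MetaTorsionFree (R : Set (Word S)) : Prop :=
  (∀ x ∈ R, ∃ y ∈ R, y ≠ x ∧ SameComp S R x y) ∧
  (∀ (n : ℕ) (c e : ℕ → Word S), 0 < n → (∀ i ≤ n, c i ∈ R) →
    (∀ i < n, IsBridge S (c i) (e i) (c (i + 1))) →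
    ∃ (g d : ℤ → Word S), (∀ i : ℤ, g i ∈ R) ∧
      (∀ i : ℤ, IsBridge S (g i) (d i) (g (i + 1))) ∧
      (∀ i : ℕ, i ≤ n → g (i : ℤ) = c i) ∧ (∀ i : ℕ, i < n → d (i : ℤ) = e i))

/-- A non-domestic string algebra: one with infinitely many bands. -/
def NonDomestic : Prop := ¬ {b : Word S | IsBand S b}.Finite

end SA

/-! The direct and the inverse runs of a string have length at most `m`, so every stretch of
length `2m + 1` of a band contains a seam `aB` (a direct letter followed by an inverse one).
If two disjoint seams carry the same two-letter string `aB`, cutting a cyclic permutation of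
the band at both gives two cyclic strings `B⋯a`. A relation is direct or inverse, so it cannot
straddle the seam `aB`; hence all powers of these two strings are strings, each of them is a
power of a band, and the band is not prime. By pigeonhole, a prime band has length less than
`(n + 1)(2m + 1)`, where `n` is the number of two-letter strings `aB`. -/

namespace List

theorem exists_eq_append_pair_append_pair_or_length_lt {α : Type*} (p : α → α → Prop) (k : ℕ)
    (T : Finset (α × α)) (L : List α)
    (hT : ∀ x y, p x y → [x, y] <:+: L → (x, y) ∈ T)
    (hwin : ∀ C, C <:+: L → C.length = k → ∃ x y, p x y ∧ [x, y] <:+: C) :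
    (∃ x y P M Q, p x y ∧ L = P ++ x :: y :: M ++ x :: y :: Q) ∨
      L.length < (T.card + 1) * k := by
  classical
  induction T using Finset.strongInduction generalizing L with
  | H T ih =>
  by_cases hLk : L.length < k
  · exact Or.inr (hLk.trans_le (Nat.le_mul_of_pos_left k T.card.succ_pos))
  have htake : (L.take k).length = k := by rw [length_take]; omega
  obtain ⟨x, y, hxy, P, R₀, hPR⟩ := hwin (L.take k) (L.take_prefix k).isInfix htake
  have hPk : P.length + 2 ≤ k := by
    have := congrArg length hPR
    simp only [length_append, htake, length_cons, length_nil] at this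
    omega
  set R := R₀ ++ L.drop k
  have hL : L = P ++ [x, y] ++ R := by
    calc L = L.take k ++ L.drop k := (take_append_drop k L).symm
      _ = P ++ [x, y] ++ R := by rw [← hPR, append_assoc _ R₀]
  have hRL : R <:+: L := hL ▸ (suffix_append (P ++ [x, y]) R).isInfix
  by_cases hR : [x, y] <:+: R
  · obtain ⟨M, Q, hMQ⟩ := hR
    exact Or.inl ⟨x, y, P, M, Q, hxy, by rw [hL, ← hMQ]; simp⟩
  have hxyT : (x, y) ∈ T := hT x y hxy (hL ▸ infix_append P [x, y] R)
  have hT' : ∀ x' y', p x' y' → [x', y'] <:+: R → (x', y') ∈ T.erase (x, y) := by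
    refine fun x' y' h' hR' => Finset.mem_erase.2 ⟨?_, hT x' y' h' (hR'.trans hRL)⟩
    rintro ⟨⟩
    exact hR hR'
  rcases ih _ (Finset.erase_ssubset hxyT) R hT' (fun C hC => hwin C (hC.trans hRL)) with
    ⟨x', y', P', M, Q, h', hR'⟩ | hlen
  · exact Or.inl ⟨x', y', P ++ x :: y :: P', M, Q, h', by rw [hL, hR']; simp⟩
  · rw [Finset.card_erase_add_one hxyT] at hlen
    rw [hL, Nat.succ_mul]
    simp only [length_append, length_cons, length_nil]
    omega

end List

namespace SA

open List

section

variable (S : SAQuiver)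

def DirectPaths : Set (List S.A) :=
  {p | p ≠ [] ∧ IsWalk S (p.map Sum.inl) ∧ ∀ q ∈ S.rel, ¬ q <:+: p}

def IsSeam (x y : Syl S) : Prop :=
  IsStr S [x, y] ∧ (∃ a, x = Sum.inl a) ∧ ∃ b, y = Sum.inr b

end

variable {S : SAQuiver}

theorem isWalk_iff_isChain : ∀ w : Word S,
    IsWalk S w ↔ w.IsChain (fun x y => sylTgt S x = sylSrc S y)
  | [] => by simp [IsWalk]
  | [x] => by simp [IsWalk]
  | x :: y :: l => by simp [IsWalk, isWalk_iff_isChain (y :: l)]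

theorem reduced_iff_isChain : ∀ w : Word S,
    Reduced S w ↔ w.IsChain (fun x y => y ≠ sylInv S x)
  | [] => by simp [Reduced]
  | [x] => by simp [Reduced]
  | x :: y :: l => by simp [Reduced, reduced_iff_isChain (y :: l)]

theorem IsStr.infix {w d : Word S} (hw : IsStr S w) (hd : d <:+: w) (hne : d ≠ []) :
    IsStr S d :=
  ⟨hne, (isWalk_iff_isChain d).2 (((isWalk_iff_isChain w).1 hw.2.1).infix hd),
    (reduced_iff_isChain d).2 (((reduced_iff_isChain w).1 hw.2.2.1).infix hd),
    fun p hp => ⟨fun h => (hw.2.2.2 p hp).1 (h.trans hd), fun h => (hw.2.2.2 p hp).2 (h.trans hd)⟩⟩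

theorem DirectWord.length_le {m : ℕ} (hm : m ∈ upperBounds (length '' DirectPaths S))
    {w d : Word S} (hw : IsStr S w) (hd : d <:+: w) (hdir : DirectWord S d) : d.length ≤ m := by
  rcases eq_or_ne d [] with rfl | hne
  · exact Nat.zero_le m
  have hrange : d ∈ Set.range (map Sum.inl) := by
    rw [Set.range_list_map]
    intro x hx
    obtain ⟨a, rfl⟩ := hdir x hx
    exact ⟨a, rfl⟩
  obtain ⟨p, rfl⟩ := hrange
  have hp := hw.infix hd hne
  rw [length_map]
  exact hm ⟨p, ⟨by simpa using hne, hp.2.1, fun q hq h => (hp.2.2.2 q hq).1 (h.map _)⟩, rfl⟩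

theorem InverseWord.length_le {m : ℕ} (hm : m ∈ upperBounds (length '' DirectPaths S))
    {w d : Word S} (hw : IsStr S w) (hd : d <:+: w) (hinv : InverseWord S d) :
    d.length ≤ m := by
  rcases eq_or_ne d [] with rfl | hne
  · exact Nat.zero_le m
  have hrange : d ∈ Set.range (map Sum.inr) := by
    rw [Set.range_list_map]
    intro x hx
    obtain ⟨a, rfl⟩ := hinv x hx
    exact ⟨a, rfl⟩
  obtain ⟨p, rfl⟩ := hrange
  have hp := hw.infix hd hne
  have hwalk : IsWalk S (p.reverse.map Sum.inl) := by
    have := (isWalk_iff_isChain _).1 hp.2.1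
    rw [isChain_map] at this
    rw [isWalk_iff_isChain, isChain_map, isChain_reverse]
    exact this.imp fun a b h => h.symm
  have hrel : ∀ q ∈ S.rel, ¬ q <:+: p.reverse := fun q hq h =>
    (hp.2.2.2 q hq).2 (by simpa using (reverse_infix.2 h).map Sum.inr)
  rw [length_map, ← length_reverse]
  exact hm ⟨p.reverse, ⟨by simpa using hne, hwalk, hrel⟩, rfl⟩

theorem eq_inverseWord_append_directWord {w : Word S}
    (h : ∀ a b, ¬ [Sum.inl a, Sum.inr b] <:+: w) :
    ∃ u v, w = u ++ v ∧ InverseWord S u ∧ DirectWord S v := by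
  induction w with
  | nil => exact ⟨[], [], rfl, by simp [InverseWord], by simp [DirectWord]⟩
  | cons x t ih =>
    obtain ⟨u, v, rfl, hu, hv⟩ := ih fun a b hab => h a b (hab.trans (suffix_cons x _).isInfix)
    rcases x with a | b
    · cases u with
      | nil =>
        refine ⟨[], Sum.inl a :: v, rfl, by simp [InverseWord], ?_⟩
        rintro x (_ | ⟨_, hx⟩)
        exacts [⟨a, rfl⟩, hv x hx]
      | cons y u =>
        obtain ⟨b, rfl⟩ := hu y mem_cons_self
        exact absurd ⟨[], u ++ v, rfl⟩ (h a b)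
    · refine ⟨Sum.inr b :: u, v, rfl, ?_, hv⟩
      rintro x (_ | ⟨_, hx⟩)
      exacts [⟨b, rfl⟩, hu x hx]

theorem IsStr.exists_seam_infix {m : ℕ} (hm : m ∈ upperBounds (length '' DirectPaths S))
    {w : Word S} (hw : IsStr S w) (hlen : 2 * m < w.length) :
    ∃ x y, IsSeam S x y ∧ [x, y] <:+: w := by
  by_contra hno
  obtain ⟨u, v, rfl, hu, hv⟩ := eq_inverseWord_append_directWord (S := S) fun a b hab =>
    hno ⟨_, _, ⟨hw.infix hab (by simp), ⟨a, rfl⟩, b, rfl⟩, hab⟩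
  have hu' := hu.length_le hm hw (prefix_append u v).isInfix
  have hv' := hv.length_le hm hw (suffix_append u v).isInfix
  rw [length_append] at hlen
  omega

theorem pow_succ (w : Word S) (n : ℕ) : pow S w (n + 1) = w ++ pow S w n := by
  simp [pow, replicate_succ]

theorem pow_succ' (w : Word S) (n : ℕ) : pow S w (n + 1) = pow S w n ++ w := by
  simp [pow, replicate_succ']

theorem pow_two (w : Word S) : pow S w 2 = w ++ w := by
  simp [pow, replicate_succ]

theorem pow_nil (k : ℕ) : pow S [] k = [] := by
  simp [pow]

theorem length_pow (w : Word S) (n : ℕ) : (pow S w n).length = n * w.length := by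
  simp [pow, length_flatten, sum_replicate]

theorem pow_add (w : Word S) (j k : ℕ) : pow S w (j + k) = pow S w j ++ pow S w k := by
  rw [pow, pow, pow, replicate_add, flatten_append]

theorem pow_pow (w : Word S) (j k : ℕ) : pow S (pow S w j) k = pow S w (j * k) := by
  induction k with
  | zero => rfl
  | succ k ih => rw [pow_succ, ih, Nat.mul_succ, Nat.add_comm, pow_add]

theorem IsRotation.infix_pow_two {u w : Word S} (h : IsRotation S u w) : u <:+: pow S w 2 := by
  obtain ⟨l₁, l₂, rfl, rfl⟩ := h
  exact ⟨l₁, l₂, by simp [pow_two]⟩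

theorem isChain_pow {R : Syl S → Syl S → Prop} {c : Word S} {x y : Syl S} (hc : c.IsChain R)
    (hx : c.getLast? = some x) (hy : c.head? = some y) (hR : R x y) (n : ℕ) :
    (pow S c n).IsChain R := by
  induction n with
  | zero => simp [pow]
  | succ n ih =>
    rw [pow_succ]
    refine isChain_append.2 ⟨hc, ih, ?_⟩
    rw [hx]
    intro x' hx' y' hy'
    cases n with
    | zero => simp [pow] at hy'
    | succ n =>
      rw [pow_succ, head?_append, hy] at hy'
      simp only [Option.mem_def, Option.some_or, Option.some.injEq] at hx' hy'
      exact hx' ▸ hy' ▸ hR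

theorem infix_of_infix_pow {c d : Word S} {x y : Syl S} (hx : c.getLast? = some x)
    (hy : c.head? = some y) (hd : ¬ [x, y] <:+: d) : ∀ n, d <:+: pow S c n → d <:+: c
  | 0, h => by
    rw [show pow S c 0 = [] from rfl, infix_nil] at h
    exact h ▸ nil_infix
  | n + 1, h => by
    rw [pow_succ, infix_append_iff] at h
    rcases h with h | h | ⟨d₁, d₂, rfl, h₁, h₂⟩
    · exact h
    · exact infix_of_infix_pow hx hy hd n h
    rcases eq_nil_or_concat d₁ with rfl | ⟨d₁, x', rfl⟩
    · exact infix_of_infix_pow hx hy hd n h₂.isInfix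
    rcases d₂ with _ | ⟨y', d₂⟩
    · simpa using h₁.isInfix
    exfalso
    obtain ⟨t₁, ht₁⟩ := h₁
    obtain ⟨t₂, ht₂⟩ := h₂
    cases n with
    | zero => simp [pow] at ht₂
    | succ n =>
      have hx' : x' = x := by simpa [← ht₁, ← append_assoc] using hx
      have hy' : y' = y := by
        have := congrArg head? ht₂
        rw [pow_succ, head?_append_of_ne_nil _ (ne_nil_of_mem (mem_of_mem_head? hy)), hy] at this
        simpa using this
      subst hx' hy'
      exact hd ⟨d₁, d₂, by simp⟩

theorem IsStr.pow_of_seam {c : Word S} {a b : S.A} (hc : IsStr S c)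
    (hhead : c.head? = some (Sum.inr b)) (hlast : c.getLast? = some (Sum.inl a))
    (hseam : IsStr S [Sum.inl a, Sum.inr b]) {n : ℕ} (hn : n ≠ 0) : IsStr S (pow S c n) := by
  refine ⟨fun h => ?_, ?_, ?_, fun p hp => ⟨fun h => ?_, fun h => ?_⟩⟩
  · have := congrArg length h
    rw [length_pow, length_nil, Nat.mul_eq_zero] at this
    exact this.elim hn fun h => hc.1 (eq_nil_of_length_eq_zero h)
  · exact (isWalk_iff_isChain _).2 <| isChain_pow ((isWalk_iff_isChain c).1 hc.2.1) hlast hhead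
      hseam.2.1.1 n
  · exact (reduced_iff_isChain _).2 <| isChain_pow ((reduced_iff_isChain c).1 hc.2.2.1) hlast
      hhead hseam.2.2.1.1 n
  · refine (hc.2.2.2 p hp).1 (infix_of_infix_pow hlast hhead (fun h' => ?_) n h)
    simpa using h'.subset (mem_cons_of_mem _ mem_cons_self)
  · refine (hc.2.2.2 p hp).2 (infix_of_infix_pow hlast hhead (fun h' => ?_) n h)
    simpa using h'.subset mem_cons_self

theorem exists_primitive_pow_eq (w : Word S) (hw : w ≠ []) :
    ∃ u k, Primitive S u ∧ w = pow S u k := by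
  by_cases hprim : Primitive S w
  · exact ⟨w, 1, hprim, by simp [pow]⟩
  obtain ⟨u, k, hk, rfl⟩ := not_not.1 hprim
  have hu : u ≠ [] := by rintro rfl; exact hw (pow_nil k)
  have hlt : u.length < (pow S u k).length := by
    rw [length_pow]
    exact lt_mul_left (length_pos_iff.2 hu) (by omega)
  obtain ⟨v, j, hv, rfl⟩ := exists_primitive_pow_eq u hu
  exact ⟨v, j * k, hv, pow_pow v j k⟩
termination_by w.length

theorem isBand_of_seam {u : Word S} {a b : S.A} (hu : IsStr S u) (hprim : Primitive S u)
    (hhead : u.head? = some (Sum.inr b)) (hlast : u.getLast? = some (Sum.inl a))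
    (hseam : IsStr S [Sum.inl a, Sum.inr b]) : IsBand S u := by
  have hcyc : wSrc S u = wTgt S u := by
    obtain ⟨t, rfl⟩ := head?_eq_some_iff.1 hhead
    simpa [wSrc, wTgt, hlast, sylSrc, sylTgt] using hseam.2.1.1.symm
  exact ⟨hu, ⟨hu.1, hcyc⟩, hprim, ⟨b, hhead⟩, ⟨a, hlast⟩,
    fun n hn => hu.pow_of_seam hhead hlast hseam (by omega)⟩

theorem IsStr.exists_isBand_flatten_of_seam {c : Word S} {a b : S.A} (hc : IsStr S c)
    (hhead : c.head? = some (Sum.inr b)) (hlast : c.getLast? = some (Sum.inl a))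
    (hseam : IsStr S [Sum.inl a, Sum.inr b]) :
    ∃ parts : List (Word S), parts ≠ [] ∧ c = parts.flatten ∧ ∀ p ∈ parts, IsBand S p := by
  obtain ⟨u, k, hprim, rfl⟩ := exists_primitive_pow_eq c hc.1
  obtain ⟨k, rfl⟩ : ∃ j, k = j + 1 := Nat.exists_eq_succ_of_ne_zero (by rintro rfl; exact hc.1 rfl)
  have hu : u ≠ [] := by rintro rfl; exact hc.1 (pow_nil _)
  refine ⟨replicate (k + 1) u, by simp, rfl, fun p hp => ?_⟩
  obtain rfl := eq_of_mem_replicate hp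
  rw [pow_succ, head?_append_of_ne_nil _ hu] at hhead
  rw [pow_succ', getLast?_append_of_ne_nil _ hu] at hlast
  exact isBand_of_seam (hc.infix (by rw [pow_succ]; exact (prefix_append _ _).isInfix) hu)
    hprim hhead hlast hseam

theorem not_isPrimeBand_of_eq_seam_append_seam {w P M Q : Word S} {a b : S.A}
    (hseam : IsStr S [Sum.inl a, Sum.inr b])
    (hw : w = P ++ Sum.inl a :: Sum.inr b :: M ++ Sum.inl a :: Sum.inr b :: Q) :
    ¬ IsPrimeBand S w := by
  rintro ⟨hband, hprime⟩
  set c₁ : Word S := Sum.inr b :: M ++ [Sum.inl a]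
  set c₂ : Word S := Sum.inr b :: (Q ++ P) ++ [Sum.inl a]
  have hrot : IsRotation S (c₁ ++ c₂) w :=
    ⟨P ++ [Sum.inl a], Sum.inr b :: M ++ Sum.inl a :: Sum.inr b :: Q, by simp [hw],
      by simp [c₁, c₂]⟩
  have hstr : IsStr S (c₁ ++ c₂) :=
    (hband.2.2.2.2.2 2 (by omega)).infix hrot.infix_pow_two (by simp [c₁])
  obtain ⟨parts₁, hne₁, h₁, hb₁⟩ := (hstr.infix (prefix_append c₁ c₂).isInfix (by simp [c₁])
    ).exists_isBand_flatten_of_seam rfl (getLast?_concat ..) hseam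
  obtain ⟨parts₂, hne₂, h₂, hb₂⟩ := (hstr.infix (suffix_append c₁ c₂).isInfix (by simp [c₂])
    ).exists_isBand_flatten_of_seam rfl (getLast?_concat ..) hseam
  refine hprime ⟨c₁ ++ c₂, parts₁ ++ parts₂, hrot, ?_, by rw [flatten_append, ← h₁, ← h₂],
    fun p hp => ⟨p, (mem_append.1 hp).elim (hb₁ p) (hb₂ p), [], p, by simp, by simp⟩⟩
  rw [length_append]
  have := length_pos_iff.2 hne₁
  have := length_pos_iff.2 hne₂
  omega

theorem IsPrimeBand.length_lt [Finite S.A] {m : ℕ}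
    (hm : m ∈ upperBounds (length '' DirectPaths S)) {w : Word S} (hw : IsPrimeBand S w) :
    w.length < ({xy : Syl S × Syl S | IsSeam S xy.1 xy.2}.ncard + 1) * (2 * m + 1) := by
  have hfin := Set.toFinite {xy : Syl S × Syl S | IsSeam S xy.1 xy.2}
  rw [Set.ncard_eq_toFinset_card _ hfin]
  refine (List.exists_eq_append_pair_append_pair_or_length_lt (IsSeam S) (2 * m + 1)
    hfin.toFinset w (fun x y hxy _ => by simpa using hxy) fun C hC hlen => ?_).resolve_left ?_
  · exact (hw.1.1.infix hC (ne_nil_of_length_pos (by omega))).exists_seam_infix hm (by omega)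
  · rintro ⟨_, _, P, M, Q, ⟨hseam, ⟨a, rfl⟩, b, rfl⟩, hPMQ⟩
    exact not_isPrimeBand_of_eq_seam_append_seam hseam hPMQ hw

end SA

open SA in
/-- A string algebra has only finitely many prime bands: the length of any prime band is
absolutely bounded, hence the set of prime bands is finite. -/
theorem finitely_many_prime_bands (S : SAQuiver) (hSA : SA.IsStringAlgebra S) :
    (∃ N : ℕ, ∀ w : Word S, IsPrimeBand S w → w.length ≤ N) ∧
    {w : Word S | IsPrimeBand S w}.Finite := by
  obtain ⟨-, hA, -, hpaths, -⟩ := hSA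
  obtain ⟨m, hm⟩ := (hpaths.image List.length).bddAbove
  have hbound (w : Word S) (hw : IsPrimeBand S w) :
      w.length ≤ ({xy : Syl S × Syl S | IsSeam S xy.1 xy.2}.ncard + 1) * (2 * m + 1) :=
    (hw.length_lt hm).le
  exact ⟨⟨_, hbound⟩, (List.finite_length_le _ _).subset hbound⟩
end

section
/- Let Λ be a string algebra, w a band-free string, and α a syllable such that the composition αw is a string. Then αw is generated by a path of length at most 2 in the extended weak bridge quiver: either αw is band-free (generated by a single weak zero bridge), or there is a unique decomposition w = w₁w₂ with w₁ of least length such that αw₁ is a cyclic permutation of a prime band b_w, and αw is obtained by inserting b_w appropriately, i.e., αw = u u' w₂ where u'u = b_w and αw₁ = u u' (possibly with u' empty). -/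
/-!
If `w ++ [α]` contains a rotation of a band while `w` does not, that rotation is a suffix
ending in `α`; take the shortest such suffix `w₁ ++ [α]`, a rotation of a band `b`. If `b` were
not prime, a rotation of it would split into at least two rotations of bands, and one of them
would lie inside `w₁ ++ [α]` and be strictly shorter: it cannot lie in `w₁`, since `w` is
band-free, so it is a shorter suffix ending in `α`, contradicting minimality.
-/

namespace List

variable {γ : Type*}

theorem exists_mem_infix_lt_length_of_isRotated_flatten {v : List γ} {L : List (List γ)}
    (hv : v ~r L.flatten) (hL : 2 ≤ L.length) (hne : ∀ p ∈ L, p ≠ []) :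
    ∃ q ∈ L, q <:+: v ∧ q.length < v.length := by
  suffices ∃ p q r : List γ, p ≠ [] ∧ q ∈ L ∧ v = p ++ q ++ r by
    obtain ⟨p, q, r, hp, hq, rfl⟩ := this
    refine ⟨q, hq, ⟨p, r, rfl⟩, ?_⟩
    have := length_pos_of_ne_nil hp
    simp only [length_append]
    omega
  obtain ⟨n, -, hn⟩ := isRotated_iff_mod.mp hv
  rw [rotate_eq_drop_append_take_mod, eq_comm] at hn
  rw [← take_append_drop (n % v.length) v]
  -- the rotation cuts `L.flatten` either between two parts or inside one
  rcases flatten_eq_append_iff.mp hn with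
    ⟨as, bs, rfl, has, hbs⟩ | ⟨as, bs, c, cs, ds, rfl, has, hbs⟩
  · rcases hM : bs ++ as with _ | ⟨p, _ | ⟨q, M⟩⟩
    · simp_all
    · have := congrArg length hM
      simp only [length_append, length_cons, length_nil] at this hL
      omega
    · have hmem : ∀ x, x ∈ as ++ bs ↔ x ∈ bs ++ as := fun x => perm_append_comm.mem_iff
      refine ⟨p, q, M.flatten, hne p ((hmem p).2 (by simp [hM])), (hmem q).2 (by simp [hM]), ?_⟩
      rw [has, hbs, ← flatten_append, hM]
      simp
  · rcases hM : ds ++ as with _ | ⟨q, M⟩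
    · simp_all
    · refine ⟨c :: cs, q, M.flatten ++ bs, cons_ne_nil _ _, ?_, ?_⟩
      · have hq : q ∈ ds ++ as := hM ▸ mem_cons_self
        simp only [mem_append, mem_cons] at hq ⊢
        tauto
      · rw [has, hbs]
        have hflat := congrArg flatten hM
        simp only [flatten_append, flatten_cons] at hflat
        rw [← append_assoc, append_assoc _ ds.flatten, hflat]
        simp

end List

namespace SA

variable {S : SAQuiver}

theorem IsRotation.isRotated {u w : Word S} (h : IsRotation S u w) : u ~r w := by
  obtain ⟨l₁, l₂, rfl, rfl⟩ := h
  exact List.isRotated_append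

theorem RotOfBand.ne_nil {u : Word S} (h : RotOfBand S u) : u ≠ [] := by
  obtain ⟨b, hb, hub⟩ := h
  rintro rfl
  exact hb.1.1 (List.isRotated_nil_iff'.mp hub.isRotated).symm

theorem RotOfBand.exists_suffix_of_infix_append_singleton {w q : Word S} {α : Syl S}
    (hw : BandFree S w) (hq : RotOfBand S q) (h : q <:+: w ++ [α]) :
    ∃ s, s <:+ w ∧ q = s ++ [α] := by
  rcases List.infix_concat_iff.mp h with hsuf | hinf
  · rcases List.suffix_concat_iff.mp hsuf with hnil | ⟨s, rfl, hs⟩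
    · exact absurd hnil hq.ne_nil
    · exact ⟨s, hs, rfl⟩
  · exact absurd ⟨q, hq, hinf⟩ hw

theorem exists_shortest_suffix_rotOfBand {w : Word S} {α : Syl S} (hw : BandFree S w)
    (h : ¬ BandFree S (w ++ [α])) :
    ∃ w₁, w₁ <:+ w ∧ RotOfBand S (w₁ ++ [α]) ∧
      ∀ s, s <:+ w → RotOfBand S (s ++ [α]) → w₁.length ≤ s.length := by
  obtain ⟨q, hq, hinf⟩ := not_not.mp h
  obtain ⟨s, hs, rfl⟩ := hq.exists_suffix_of_infix_append_singleton hw hinf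
  obtain ⟨w₁, ⟨hw₁, hrot⟩, hmin⟩ := (measure List.length).wf.has_min
    {s | s <:+ w ∧ RotOfBand S (s ++ [α])} ⟨s, hs, hq⟩
  exact ⟨w₁, hw₁, hrot, fun s hs hrot => not_lt.mp (hmin s ⟨hs, hrot⟩)⟩

theorem isPrimeBand_of_shortest_suffix {w w₁ b : Word S} {α : Syl S} (hw : BandFree S w)
    (hw₁ : w₁ <:+ w) (hb : IsBand S b) (hrot : w₁ ++ [α] ~r b)
    (hmin : ∀ s, s <:+ w → RotOfBand S (s ++ [α]) → w₁.length ≤ s.length) :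
    IsPrimeBand S b := by
  refine ⟨hb, ?_⟩
  rintro ⟨w', parts, hw', hlen, rfl, hparts⟩
  obtain ⟨q, hq, hqinf, hqlen⟩ := List.exists_mem_infix_lt_length_of_isRotated_flatten
    (hrot.trans hw'.isRotated.symm) hlen fun p hp => (hparts p hp).ne_nil
  have hw₁free : BandFree S w₁ := fun ⟨u, hu, hinf⟩ => hw ⟨u, hu, hinf.trans hw₁.isInfix⟩
  obtain ⟨s, hs, rfl⟩ := (hparts q hq).exists_suffix_of_infix_append_singleton hw₁free hqinf
  have hle := hmin s (hs.trans hw₁) (hparts _ hq)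
  simp only [List.length_append, List.length_singleton] at hqlen
  omega

end SA

open SA in
theorem band_free_extension_generated_general (S : SAQuiver)
    (w : Word S) (α : Syl S) (hw : BandFree S w) :
    BandFree S (w ++ [α]) ∨
    ∃ w₁ w₂ bw uu uu' : Word S,
      w = w₂ ++ w₁ ∧ IsPrimeBand S bw ∧ bw = uu ++ uu' ∧ w₁ ++ [α] = uu' ++ uu ∧
      ∀ w₁' w₂' : Word S, w = w₂' ++ w₁' → RotOfBand S (w₁' ++ [α]) →
        w₁.length ≤ w₁'.length := by
  by_cases hbf : BandFree S (w ++ [α])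
  · exact Or.inl hbf
  obtain ⟨w₁, hw₁, ⟨b, hb, l₁, l₂, hbl, hw₁l⟩, hmin⟩ := exists_shortest_suffix_rotOfBand hw hbf
  have hprime : IsPrimeBand S b :=
    isPrimeBand_of_shortest_suffix hw hw₁ hb (IsRotation.isRotated ⟨l₁, l₂, hbl, hw₁l⟩) hmin
  obtain ⟨w₂, rfl⟩ := hw₁
  exact Or.inr ⟨w₁, w₂, b, l₁, l₂, rfl, hprime, hbl, hw₁l,
    fun w₁' w₂' h hrot => hmin w₁' ⟨w₂', h.symm⟩ hrot⟩

open SA in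
/-- Let `w` be a band-free string and `α` a syllable such that `αw` is a string.  Then
either `αw` is band-free (it is generated by a single weak zero bridge), or there is a
decomposition `w = w₁w₂` with `w₁` of least length such that `αw₁` is a cyclic permutation
of a prime band `bw`; writing `bw = u'u` with `αw₁ = u u'`, the string `αw = u u' w₂` is
generated by a path through `bw` in the extended weak bridge quiver (a path of length at
most 2). -/
theorem band_free_extension_generated (S : SAQuiver) (hSA : SA.IsStringAlgebra S)
    (w : Word S) (α : Syl S) (hw : BandFree S w) (hstr : IsStr S (w ++ [α])) :
    BandFree S (w ++ [α]) ∨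
    ∃ w₁ w₂ bw uu uu' : Word S,
      w = w₂ ++ w₁ ∧ IsPrimeBand S bw ∧ bw = uu ++ uu' ∧ w₁ ++ [α] = uu' ++ uu ∧
      ∀ w₁' w₂' : Word S, w = w₂' ++ w₁' → RotOfBand S (w₁' ++ [α]) →
        w₁.length ≤ w₁'.length :=
  band_free_extension_generated_general S w α hw
end
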